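/- Assume the subset LCM assumption (E(x_j | X_F) = E(x_j X_Fᵀ)Σ_F^{-1}X_F a.s.). For M^{DR2}_F = Σ_{h=1}^H p_h Σ_F^{-1/2} U_{F,h} U_{F,h}ᵀ Σ_F^{-1/2}, and for any F ⊂ I and j ∈ F^c, trace{(M^{DR2}_{F∪{j}})²} = trace{(M^{DR2}_F)²} + 2 ι_{j|F}ᵀι_{j|F} + ϱ_{j|F}². -/

import Mathlib

open MeasureTheory ProbabilityTheory Matrix Filter Finset
open scoped BigOperators ENNReal

noncomputable section

namespace TracePursuit

variable {Ω : Type*}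

/-- Second-moment (= covariance, under mean zero) matrix of the coordinates of `X` in `F`. -/
def covM [MeasurableSpace Ω] (μ : Measure Ω) {p : ℕ} (X : Ω → Fin p → ℝ)
    (F : Finset (Fin p)) : Matrix F F ℝ :=
  Matrix.of fun i j => ∫ ω, X ω i.1 * X ω j.1 ∂μ

/-- Slice probability `p_h = P(Y ∈ J_h)`. -/
def sliceP [MeasurableSpace Ω] (μ : Measure Ω) {H : ℕ} (Y : Ω → ℝ)
    (J : Fin H → Set ℝ) (h : Fin H) : ℝ :=
  (μ (Y ⁻¹' J h)).toReal

/-- Slice mean vector `U_{F,h} = E(X_F | Y ∈ J_h)`. -/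
def sliceU [MeasurableSpace Ω] (μ : Measure Ω) {p H : ℕ} (X : Ω → Fin p → ℝ)
    (Y : Ω → ℝ) (J : Fin H → Set ℝ) (F : Finset (Fin p)) (h : Fin H) : F → ℝ :=
  fun i => (∫ ω in Y ⁻¹' J h, X ω i.1 ∂μ) / sliceP μ Y J h

/-- Slice second-moment matrix `V_{F,h} = E(X_F X_Fᵀ | Y ∈ J_h)`. -/
def sliceV [MeasurableSpace Ω] (μ : Measure Ω) {p H : ℕ} (X : Ω → Fin p → ℝ)
    (Y : Ω → ℝ) (J : Fin H → Set ℝ) (F : Finset (Fin p)) (h : Fin H) : Matrix F F ℝ :=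
  Matrix.of fun i j => (∫ ω in Y ⁻¹' J h, X ω i.1 * X ω j.1 ∂μ) / sliceP μ Y J h

/-- The SIR kernel matrix `M^SIR_F = Σ_F^{-1/2} (Σ_h p_h U_{F,h} U_{F,h}ᵀ) Σ_F^{-1/2}`,
where `S` is the inverse square root `Σ_F^{-1/2}`. -/
def MSIR [MeasurableSpace Ω] (μ : Measure Ω) {p H : ℕ} (X : Ω → Fin p → ℝ)
    (Y : Ω → ℝ) (J : Fin H → Set ℝ) (F : Finset (Fin p)) (S : Matrix F F ℝ) :
    Matrix F F ℝ :=
  S * (∑ h, sliceP μ Y J h • vecMulVec (sliceU μ X Y J F h) (sliceU μ X Y J F h)) * S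

/-- The SAVE kernel matrix
`M^SAVE_F = Σ_h p_h (Σ_F^{-1/2}(Σ_F - V_{F,h} + U_{F,h}U_{F,h}ᵀ)Σ_F^{-1/2})²`. -/
def MSAVE [MeasurableSpace Ω] (μ : Measure Ω) {p H : ℕ} (X : Ω → Fin p → ℝ)
    (Y : Ω → ℝ) (J : Fin H → Set ℝ) (F : Finset (Fin p)) (S : Matrix F F ℝ) :
    Matrix F F ℝ :=
  ∑ h, sliceP μ Y J h •
    (S * (covM μ X F - sliceV μ X Y J F h
        + vecMulVec (sliceU μ X Y J F h) (sliceU μ X Y J F h)) * S) ^ 2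

/-- `κ_F = Σ_h p_h U_{F,h}ᵀ Σ_F⁻¹ U_{F,h}`. -/
def kappaF [MeasurableSpace Ω] (μ : Measure Ω) {p H : ℕ} (X : Ω → Fin p → ℝ)
    (Y : Ω → ℝ) (J : Fin H → Set ℝ) (F : Finset (Fin p)) : ℝ :=
  ∑ h, sliceP μ Y J h *
    (sliceU μ X Y J F h ⬝ᵥ (covM μ X F)⁻¹.mulVec (sliceU μ X Y J F h))

/-- The directional-regression kernel matrix `M^DR_F`. -/
def MDR [MeasurableSpace Ω] (μ : Measure Ω) {p H : ℕ} (X : Ω → Fin p → ℝ)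
    (Y : Ω → ℝ) (J : Fin H → Set ℝ) (F : Finset (Fin p)) (S : Matrix F F ℝ) :
    Matrix F F ℝ :=
  (2 : ℝ) • (∑ h, sliceP μ Y J h • (S * sliceV μ X Y J F h * S) ^ 2)
  + (2 : ℝ) • (∑ h, sliceP μ Y J h •
      (S * vecMulVec (sliceU μ X Y J F h) (sliceU μ X Y J F h) * S)) ^ 2
  + (2 : ℝ) • (kappaF μ X Y J F •
      (∑ h, sliceP μ Y J h •
        (S * vecMulVec (sliceU μ X Y J F h) (sliceU μ X Y J F h) * S)))
  - (2 : ℝ) • (1 : Matrix F F ℝ)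

/-- The σ-algebra generated by `X_F`. -/
def mF [MeasurableSpace Ω] {p : ℕ} (X : Ω → Fin p → ℝ) (F : Finset (Fin p)) :
    MeasurableSpace Ω :=
  MeasurableSpace.comap (fun ω => fun i : F => X ω i.1) inferInstance

/-- `θ_{j|F} = Σ_F⁻¹ E(x_j X_F)`. -/
def thetaJF [MeasurableSpace Ω] (μ : Measure Ω) {p : ℕ} (X : Ω → Fin p → ℝ)
    (F : Finset (Fin p)) (j : Fin p) : F → ℝ :=
  (covM μ X F)⁻¹.mulVec fun i => ∫ ω, X ω j * X ω i.1 ∂μ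

/-- The subset linear conditional mean assumption:
for every `F ⊂ I` and `j ∈ Fᶜ`, `E(x_j | X_F) = E(x_j X_Fᵀ) Σ_F⁻¹ X_F` a.s. -/
def SubsetLCM [MeasurableSpace Ω] (μ : Measure Ω) {p : ℕ} (X : Ω → Fin p → ℝ) : Prop :=
  ∀ (F : Finset (Fin p)) (j : Fin p), j ∉ F →
    (μ[fun ω => X ω j | mF X F]) =ᵐ[μ] fun ω => ∑ i : F, thetaJF μ X F j i * X ω i.1

/-- The subset constant conditional variance assumption:
for every `F ⊂ I` and `j ∈ Fᶜ`, `var(x_j | X_F)` is a.s. constant. -/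
def SubsetCCV [MeasurableSpace Ω] (μ : Measure Ω) {p : ℕ} (X : Ω → Fin p → ℝ) : Prop :=
  ∀ (F : Finset (Fin p)) (j : Fin p), j ∉ F → ∃ c : ℝ,
    (fun ω => (μ[fun ω' => X ω' j ^ 2 | mF X F]) ω - ((μ[fun ω' => X ω' j | mF X F]) ω) ^ 2)
      =ᵐ[μ] fun _ => c

/-- The residual `x_{j|F} = x_j - E(x_j | X_F)`. -/
def xres [MeasurableSpace Ω] (μ : Measure Ω) {p : ℕ} (X : Ω → Fin p → ℝ)
    (F : Finset (Fin p)) (j : Fin p) : Ω → ℝ :=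
  fun ω => X ω j - (μ[fun ω' => X ω' j | mF X F]) ω

/-- Variance of a real function. -/
def varF [MeasurableSpace Ω] (μ : Measure Ω) (f : Ω → ℝ) : ℝ :=
  ∫ ω, f ω ^ 2 ∂μ - (∫ ω, f ω ∂μ) ^ 2

/-- `σ²_{j|F} = var(x_{j|F})`. -/
def sigma2 [MeasurableSpace Ω] (μ : Measure Ω) {p : ℕ} (X : Ω → Fin p → ℝ)
    (F : Finset (Fin p)) (j : Fin p) : ℝ :=
  varF μ (xres μ X F j)

/-- `γ_{j|F} = x_{j|F}/σ_{j|F}`. -/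
def gammaRes [MeasurableSpace Ω] (μ : Measure Ω) {p : ℕ} (X : Ω → Fin p → ℝ)
    (F : Finset (Fin p)) (j : Fin p) : Ω → ℝ :=
  fun ω => xres μ X F j ω / Real.sqrt (sigma2 μ X F j)

/-- `γ_{j|F,h} = E(γ_{j|F} | Y ∈ J_h)`. -/
def gammaH [MeasurableSpace Ω] (μ : Measure Ω) {p H : ℕ} (X : Ω → Fin p → ℝ)
    (Y : Ω → ℝ) (J : Fin H → Set ℝ) (F : Finset (Fin p)) (j : Fin p) (h : Fin H) : ℝ :=
  (∫ ω in Y ⁻¹' J h, gammaRes μ X F j ω ∂μ) / sliceP μ Y J h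

/-- `ζ_{j|F,h} = E(γ_{j|F}² | Y ∈ J_h)`. -/
def zetaH [MeasurableSpace Ω] (μ : Measure Ω) {p H : ℕ} (X : Ω → Fin p → ℝ)
    (Y : Ω → ℝ) (J : Fin H → Set ℝ) (F : Finset (Fin p)) (j : Fin p) (h : Fin H) : ℝ :=
  (∫ ω in Y ⁻¹' J h, gammaRes μ X F j ω ^ 2 ∂μ) / sliceP μ Y J h

/-- `E(X_F γ_{j|F} | Y ∈ J_h)`. -/
def sliceXGamma [MeasurableSpace Ω] (μ : Measure Ω) {p H : ℕ} (X : Ω → Fin p → ℝ)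
    (Y : Ω → ℝ) (J : Fin H → Set ℝ) (F : Finset (Fin p)) (j : Fin p) (h : Fin H) : F → ℝ :=
  fun i => (∫ ω in Y ⁻¹' J h, X ω i.1 * gammaRes μ X F j ω ∂μ) / sliceP μ Y J h

/-- `φ_{j|F,h} = Σ_F^{-1/2} (U_{F,h} γ_{j|F,h} - E(X_F γ_{j|F} | Y ∈ J_h))`. -/
def phiH [MeasurableSpace Ω] (μ : Measure Ω) {p H : ℕ} (X : Ω → Fin p → ℝ)
    (Y : Ω → ℝ) (J : Fin H → Set ℝ) (F : Finset (Fin p)) (S : Matrix F F ℝ)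
    (j : Fin p) (h : Fin H) : F → ℝ :=
  S.mulVec fun i => sliceU μ X Y J F h i * gammaH μ X Y J F j h
    - sliceXGamma μ X Y J F j h i

/-- `ν_{j|F,h} = Σ_F^{-1/2} E(X_F γ_{j|F} | Y ∈ J_h)`. -/
def nuH [MeasurableSpace Ω] (μ : Measure Ω) {p H : ℕ} (X : Ω → Fin p → ℝ)
    (Y : Ω → ℝ) (J : Fin H → Set ℝ) (F : Finset (Fin p)) (S : Matrix F F ℝ)
    (j : Fin p) (h : Fin H) : F → ℝ :=
  S.mulVec (sliceXGamma μ X Y J F j h)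

/-- `ι_{j|F,h} = Σ_F^{-1/2} U_{F,h} γ_{j|F,h}`. -/
def iotaH [MeasurableSpace Ω] (μ : Measure Ω) {p H : ℕ} (X : Ω → Fin p → ℝ)
    (Y : Ω → ℝ) (J : Fin H → Set ℝ) (F : Finset (Fin p)) (S : Matrix F F ℝ)
    (j : Fin p) (h : Fin H) : F → ℝ :=
  gammaH μ X Y J F j h • S.mulVec (sliceU μ X Y J F h)

/-- `ι_{j|F} = Σ_h p_h ι_{j|F,h}`. -/
def iotaSum [MeasurableSpace Ω] (μ : Measure Ω) {p H : ℕ} (X : Ω → Fin p → ℝ)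
    (Y : Ω → ℝ) (J : Fin H → Set ℝ) (F : Finset (Fin p)) (S : Matrix F F ℝ)
    (j : Fin p) : F → ℝ :=
  ∑ h, sliceP μ Y J h • iotaH μ X Y J F S j h

/-- `ϱ_{j|F} = Σ_h p_h γ_{j|F,h}²`. -/
def rhoJF [MeasurableSpace Ω] (μ : Measure Ω) {p H : ℕ} (X : Ω → Fin p → ℝ)
    (Y : Ω → ℝ) (J : Fin H → Set ℝ) (F : Finset (Fin p)) (j : Fin p) : ℝ :=
  ∑ h, sliceP μ Y J h * gammaH μ X Y J F j h ^ 2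

/-- `{J_h}` is a measurable partition of the sample space of `Y`. -/
def IsSlicePartition {H : ℕ} (J : Fin H → Set ℝ) : Prop :=
  (∀ h, MeasurableSet (J h)) ∧ Pairwise (Function.onFun Disjoint J) ∧ (⋃ h, J h) = Set.univ

/-- `S` is a symmetric inverse square root of `Sig`, i.e. `S = Σ'^{-1/2}`. -/
def IsInvSqrt {n : Type*} [Fintype n] [DecidableEq n] (S Sig : Matrix n n ℝ) : Prop :=
  S.IsSymm ∧ S * S = Sig⁻¹

end TracePursuit

namespace TracePursuit

/-- `M^{DR2}_F = Σ_h p_h Σ_F^{-1/2} U_{F,h} U_{F,h}ᵀ Σ_F^{-1/2}`. -/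
def MDR2 {Ω : Type*} [MeasurableSpace Ω] (μ : Measure Ω) {p H : ℕ}
    (X : Ω → Fin p → ℝ) (Y : Ω → ℝ) (J : Fin H → Set ℝ) (F : Finset (Fin p))
    (S : Matrix F F ℝ) : Matrix F F ℝ :=
  ∑ h, sliceP μ Y J h • (S * vecMulVec (sliceU μ X Y J F h) (sliceU μ X Y J F h) * S)

end TracePursuit

open TracePursuit

/-! `M^{DR2}_F = Σ_h p_h v_h v_hᵀ` with `v_h = Σ_F^{-1/2} U_{F,h}`, so
`trace((M^{DR2}_F)²) = Σ_{h,h'} p_h p_{h'} (U_{F,h}ᵀ Σ_F⁻¹ U_{F,h'})²`.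
Adding `j` to `F` changes each bilinear form `U_{F,h}ᵀ Σ_F⁻¹ U_{F,h'}` by exactly
`γ_{j|F,h} γ_{j|F,h'}`: under LCM, with `θ = Σ_F⁻¹ E(X_F x_j)`, the covariance matrix of
`X_{F∪{j}}` is `[[Σ_F, Σ_F θ], [θᵀ Σ_F, θᵀ Σ_F θ + σ²_{j|F}]]` and the new coordinate of
`U_{F∪{j},h}` is `θᵀ U_{F,h} + σ_{j|F} γ_{j|F,h}`, so the Schur complement formula for the
inverse adds `(σ_{j|F} γ_{j|F,h}) (σ_{j|F} γ_{j|F,h'}) / σ²_{j|F}`. Squaring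
`U_{F,h}ᵀ Σ_F⁻¹ U_{F,h'} + γ_{j|F,h} γ_{j|F,h'}` and summing gives the three terms. -/

namespace Matrix

section Symmetric

variable {R n ι : Type*} [CommSemiring R] [Fintype n]

theorem trace_sq_sum_smul_vecMulVec [DecidableEq n] [Fintype ι] (c : ι → R) (v : ι → n → R) :
    ((∑ h, c h • vecMulVec (v h) (v h)) ^ 2).trace
      = ∑ h, ∑ h', c h * c h' * (v h ⬝ᵥ v h') ^ 2 := by
  rw [sq, Finset.sum_mul_sum, trace_sum]
  refine Finset.sum_congr rfl fun h _ => ?_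
  rw [trace_sum]
  refine Finset.sum_congr rfl fun h' _ => ?_
  rw [smul_mul_smul_comm, trace_smul, vecMulVec_mul_vecMulVec, trace_vecMulVec,
    dotProduct_smul, smul_eq_mul, smul_eq_mul]
  ring

theorem IsSymm.mulVec_eq_vecMul {S : Matrix n n R} (hS : S.IsSymm) (u : n → R) :
    S *ᵥ u = u ᵥ* S := by
  rw [← mulVec_transpose, hS.eq]

theorem IsSymm.mul_vecMulVec_mul {S : Matrix n n R} (hS : S.IsSymm) (u : n → R) :
    S * vecMulVec u u * S = vecMulVec (S *ᵥ u) (S *ᵥ u) := by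
  rw [mul_vecMulVec, vecMulVec_mul, ← hS.mulVec_eq_vecMul]

theorem IsSymm.mulVec_dotProduct_mulVec {S : Matrix n n R} (hS : S.IsSymm) (u v : n → R) :
    S *ᵥ u ⬝ᵥ S *ᵥ v = u ⬝ᵥ (S * S) *ᵥ v := by
  rw [hS.mulVec_eq_vecMul u, ← dotProduct_mulVec, mulVec_mulVec]

theorem IsSymm.sum_smul_mulVec_dotProduct_self [Fintype ι] {S : Matrix n n R} (hS : S.IsSymm)
    (c : ι → R) (u : ι → n → R) :
    (∑ h, c h • S *ᵥ u h) ⬝ᵥ (∑ h, c h • S *ᵥ u h)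
      = ∑ h, ∑ h', c h * c h' * (u h ⬝ᵥ (S * S) *ᵥ u h') := by
  simp only [sum_dotProduct, dotProduct_sum, smul_dotProduct, dotProduct_smul, smul_eq_mul,
    hS.mulVec_dotProduct_mulVec, Finset.mul_sum]
  rw [Finset.sum_comm]
  refine Finset.sum_congr rfl fun h _ => Finset.sum_congr rfl fun h' _ => ?_
  ring

end Symmetric

theorem dotProduct_inv_mulVec_comp_equiv {K m n : Type*} [Field K] [Fintype m] [DecidableEq m]
    [Fintype n] [DecidableEq n] (e : m ≃ n) (A : Matrix m m K) (u v : m → K) :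
    u ⬝ᵥ A⁻¹ *ᵥ v = u ∘ e.symm ⬝ᵥ (A.submatrix e.symm e.symm)⁻¹ *ᵥ (v ∘ e.symm) := by
  rw [inv_submatrix_equiv, submatrix_mulVec_equiv, Equiv.symm_symm, Function.comp_assoc,
    Equiv.symm_comp_self, Function.comp_id, comp_equiv_symm_dotProduct, Function.comp_assoc,
    Equiv.symm_comp_self, Function.comp_id]

section OptionBlocks

variable {α K n : Type*}

/-- The matrix `[[A, b], [bᵀ, d]]`, with the extra index `none` playing the role of the last
row and column. -/
def optionBlocks (A : Matrix n n α) (b : n → α) (d : α) : Matrix (Option n) (Option n) α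
  | none, none => d
  | none, some k => b k
  | some i, none => b i
  | some i, some k => A i k

theorem elim_dotProduct_elim [Fintype n] [NonUnitalNonAssocSemiring α] (q r : α) (u v : n → α) :
    (Option.elim · q u) ⬝ᵥ (Option.elim · r v) = q * r + u ⬝ᵥ v := by
  rw [dotProduct, Fintype.sum_option]
  rfl

theorem optionBlocks_mulVec_elim [Fintype n] [CommSemiring α] (A : Matrix n n α) (b : n → α)
    (d y : α) (x : n → α) :
    optionBlocks A b d *ᵥ (Option.elim · y x)
      = (Option.elim · (d * y + b ⬝ᵥ x) (A *ᵥ x + y • b)) := by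
  funext o
  cases o with
  | none => simp only [mulVec, dotProduct, Fintype.sum_option, optionBlocks, Option.elim]
  | some i =>
    simp only [mulVec, dotProduct, Fintype.sum_option, optionBlocks, Option.elim, Pi.add_apply,
      Pi.smul_apply, smul_eq_mul]
    ring

variable [Field K] [Fintype n] [DecidableEq n] {A : Matrix n n K} {θ : n → K} {s : K}

theorem optionBlocks_mulVec_solve (hA : A.IsSymm) (hAdet : IsUnit A.det) (hs : s ≠ 0)
    (v : n → K) (r : K) :
    optionBlocks A (A *ᵥ θ) (θ ⬝ᵥ A *ᵥ θ + s)
        *ᵥ (Option.elim · ((r - θ ⬝ᵥ v) / s) (A⁻¹ *ᵥ v - ((r - θ ⬝ᵥ v) / s) • θ))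
      = (Option.elim · r v) := by
  have hAA : A *ᵥ A⁻¹ *ᵥ v = v := by rw [mulVec_mulVec, mul_nonsing_inv _ hAdet, one_mulVec]
  have hθ : A *ᵥ θ ⬝ᵥ A⁻¹ *ᵥ v = θ ⬝ᵥ v := by
    rw [hA.mulVec_eq_vecMul, ← dotProduct_mulVec, hAA]
  rw [optionBlocks_mulVec_elim, dotProduct_sub, dotProduct_smul, hθ, dotProduct_comm (A *ᵥ θ),
    mulVec_sub, mulVec_smul, hAA, sub_add_cancel]
  refine congrArg (fun a => (Option.elim · a v)) ?_
  rw [smul_eq_mul]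
  field_simp
  ring

theorem isUnit_optionBlocks (hA : A.IsSymm) (hAdet : IsUnit A.det) (hs : s ≠ 0) :
    IsUnit (optionBlocks A (A *ᵥ θ) (θ ⬝ᵥ A *ᵥ θ + s)) := by
  refine mulVec_surjective_iff_isUnit.mp fun y =>
    ⟨_, (optionBlocks_mulVec_solve hA hAdet hs (y ∘ some) (y none)).trans ?_⟩
  funext o
  cases o <;> rfl

theorem elim_dotProduct_inv_optionBlocks_mulVec (hA : A.IsSymm) (hAdet : IsUnit A.det)
    (hs : s ≠ 0) (u v : n → K) (q r : K) :
    (Option.elim · q u) ⬝ᵥ (optionBlocks A (A *ᵥ θ) (θ ⬝ᵥ A *ᵥ θ + s))⁻¹ *ᵥ (Option.elim · r v)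
      = u ⬝ᵥ A⁻¹ *ᵥ v + (q - θ ⬝ᵥ u) * (r - θ ⬝ᵥ v) / s := by
  have hM := (isUnit_iff_isUnit_det _).mp (isUnit_optionBlocks (θ := θ) hA hAdet hs)
  rw [← optionBlocks_mulVec_solve hA hAdet hs v r, mulVec_mulVec, nonsing_inv_mul _ hM,
    one_mulVec, elim_dotProduct_elim, dotProduct_sub, dotProduct_smul, smul_eq_mul,
    dotProduct_comm u θ]
  ring

end OptionBlocks

end Matrix

namespace MeasureTheory

variable {Ω ι : Type*} [MeasurableSpace Ω] [Fintype ι]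

theorem integral_const_dotProduct {μ : Measure Ω} (c : ι → ℝ) {Z : Ω → ι → ℝ}
    (hZ : ∀ i, Integrable (fun ω => Z ω i) μ) :
    ∫ ω, c ⬝ᵥ Z ω ∂μ = c ⬝ᵥ fun i => ∫ ω, Z ω i ∂μ := by
  simp only [dotProduct]
  rw [integral_finsetSum _ fun i _ => (hZ i).const_mul (c i)]
  simp only [integral_const_mul]

end MeasureTheory

namespace TracePursuit

variable {Ω : Type*} [MeasurableSpace Ω] {μ : Measure Ω} {p : ℕ} {X : Ω → Fin p → ℝ}

section Moments

theorem integrable_coord_mul (hmom : ∀ i, MemLp (fun ω => X ω i) 2 μ) (k i : Fin p) :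
    Integrable (fun ω => X ω k * X ω i) μ :=
  (hmom k).integrable_mul (hmom i)

theorem memLp_dotProduct (hmom : ∀ i, MemLp (fun ω => X ω i) 2 μ) {F : Finset (Fin p)}
    (d : F → ℝ) : MemLp (fun ω => d ⬝ᵥ fun i : F => X ω i) 2 μ :=
  memLp_finsetSum _ fun i _ => (hmom i.1).const_mul (d i)

theorem integrable_coord_mul_dotProduct (hmom : ∀ i, MemLp (fun ω => X ω i) 2 μ)
    {F : Finset (Fin p)} (k : Fin p) (d : F → ℝ) :
    Integrable (fun ω => X ω k * (d ⬝ᵥ fun i : F => X ω i)) μ :=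
  (hmom k).integrable_mul (memLp_dotProduct hmom d)

theorem integral_coord_mul_dotProduct (hmom : ∀ i, MemLp (fun ω => X ω i) 2 μ)
    {F : Finset (Fin p)} (k : Fin p) (d : F → ℝ) :
    ∫ ω, X ω k * (d ⬝ᵥ fun i : F => X ω i) ∂μ = d ⬝ᵥ fun i : F => ∫ ω, X ω k * X ω i ∂μ := by
  simp only [dotProduct, Finset.mul_sum, mul_left_comm (X _ k)]
  rw [integral_finsetSum _ fun i _ => (integrable_coord_mul hmom k i.1).const_mul (d i)]
  simp only [integral_const_mul]

theorem integral_dotProduct_mul_self (hmom : ∀ i, MemLp (fun ω => X ω i) 2 μ)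
    (F : Finset (Fin p)) (d : F → ℝ) :
    ∫ ω, (d ⬝ᵥ fun i : F => X ω i) * (d ⬝ᵥ fun i : F => X ω i) ∂μ = d ⬝ᵥ covM μ X F *ᵥ d := calc
  _ = ∫ ω, d ⬝ᵥ fun k : F => X ω k * (d ⬝ᵥ fun i : F => X ω i) ∂μ := by
      simp only [dotProduct, Finset.sum_mul, mul_assoc]
  _ = d ⬝ᵥ fun k : F => ∫ ω, X ω k * (d ⬝ᵥ fun i : F => X ω i) ∂μ :=
      integral_const_dotProduct d fun k => integrable_coord_mul_dotProduct hmom k d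
  _ = d ⬝ᵥ covM μ X F *ᵥ d := by
      refine congrArg (d ⬝ᵥ ·) (funext fun k => ?_)
      rw [integral_coord_mul_dotProduct hmom, dotProduct_comm]
      rfl

theorem covM_isSymm (F : Finset (Fin p)) : (covM μ X F).IsSymm := by
  ext a b
  simp only [transpose_apply, covM, of_apply, mul_comm]

theorem covM_posDef (hpos : (covM μ X Finset.univ).PosDef) (F : Finset (Fin p)) :
    (covM μ X F).PosDef :=
  hpos.submatrix (e := fun i : F => ⟨i.1, Finset.mem_univ _⟩) fun _ _ hab =>
    Subtype.ext (congrArg Subtype.val hab :)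

theorem covM_mulVec_thetaJF {F : Finset (Fin p)} (hA : IsUnit (covM μ X F).det) (j : Fin p) :
    covM μ X F *ᵥ thetaJF μ X F j = fun i : F => ∫ ω, X ω j * X ω i ∂μ := by
  rw [thetaJF, mulVec_mulVec, mul_nonsing_inv _ hA, one_mulVec]

end Moments

section Residual

variable {F : Finset (Fin p)} {j : Fin p}

theorem xres_ae_eq (hLCM : SubsetLCM μ X) (hj : j ∉ F) :
    xres μ X F j =ᵐ[μ] fun ω => X ω j - thetaJF μ X F j ⬝ᵥ fun i : F => X ω i := by
  filter_upwards [hLCM F j hj] with ω hω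
  simp only [xres, hω]
  rfl

theorem sigma2_eq_integral_sq [IsFiniteMeasure μ] (hmom : ∀ i, MemLp (fun ω => X ω i) 2 μ)
    (hmean : ∀ i, ∫ ω, X ω i ∂μ = 0) (hLCM : SubsetLCM μ X) (hj : j ∉ F) :
    sigma2 μ X F j = ∫ ω, (X ω j - thetaJF μ X F j ⬝ᵥ fun i : F => X ω i) ^ 2 ∂μ := by
  have hres := xres_ae_eq hLCM hj
  have hres_mean : ∫ ω, (X ω j - thetaJF μ X F j ⬝ᵥ fun i : F => X ω i) ∂μ = 0 := by
    rw [integral_sub ((hmom j).integrable one_le_two)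
        ((memLp_dotProduct hmom _).integrable one_le_two),
      integral_const_dotProduct (Z := fun ω (i : F) => X ω i) _
        fun i => (hmom i.1).integrable one_le_two]
    simp [hmean]
  have hres_sq : (fun ω => xres μ X F j ω ^ 2) =ᵐ[μ]
      fun ω => (X ω j - thetaJF μ X F j ⬝ᵥ fun i : F => X ω i) ^ 2 :=
    hres.mono fun ω hω => congrArg (· ^ 2) hω
  rw [sigma2, varF, integral_congr_ae hres, integral_congr_ae hres_sq, hres_mean]
  ring

theorem integral_coord_mul_self [IsFiniteMeasure μ] (hmom : ∀ i, MemLp (fun ω => X ω i) 2 μ)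
    (hmean : ∀ i, ∫ ω, X ω i ∂μ = 0) (hLCM : SubsetLCM μ X) (hA : IsUnit (covM μ X F).det)
    (hj : j ∉ F) :
    ∫ ω, X ω j * X ω j ∂μ
      = thetaJF μ X F j ⬝ᵥ covM μ X F *ᵥ thetaJF μ X F j + sigma2 μ X F j := by
  set θ := thetaJF μ X F j
  set g := fun ω => θ ⬝ᵥ fun i : F => X ω i
  have hjj := integrable_coord_mul hmom j j
  have hjg : Integrable (fun ω => 2 * (X ω j * g ω)) μ :=
    (integrable_coord_mul_dotProduct hmom j θ).const_mul 2
  have hgg : Integrable (fun ω => g ω * g ω) μ :=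
    (memLp_dotProduct hmom θ).integrable_mul (memLp_dotProduct hmom θ)
  have hexpand : (fun ω => (X ω j - g ω) ^ 2)
      = fun ω => X ω j * X ω j - 2 * (X ω j * g ω) + g ω * g ω := by
    funext ω
    ring
  rw [sigma2_eq_integral_sq hmom hmean hLCM hj, hexpand,
    integral_add (f := fun ω => X ω j * X ω j - 2 * (X ω j * g ω)) (hjj.sub hjg) hgg,
    integral_sub hjj hjg, integral_const_mul, integral_coord_mul_dotProduct hmom,
    integral_dotProduct_mul_self hmom, ← covM_mulVec_thetaJF hA]
  ring

theorem sliceU_insert_self [IsFiniteMeasure μ] {H : ℕ} (Y : Ω → ℝ) (J : Fin H → Set ℝ)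
    (hmom : ∀ i, MemLp (fun ω => X ω i) 2 μ) (hLCM : SubsetLCM μ X) (hj : j ∉ F)
    (hsig : 0 < sigma2 μ X F j) (h : Fin H) :
    sliceU μ X Y J (insert j F) h ⟨j, Finset.mem_insert_self j F⟩
      = thetaJF μ X F j ⬝ᵥ sliceU μ X Y J F h
        + Real.sqrt (sigma2 μ X F j) * gammaH μ X Y J F j h := by
  set θ := thetaJF μ X F j
  set ν := μ.restrict (Y ⁻¹' J h)
  have hsqrt : Real.sqrt (sigma2 μ X F j) ≠ 0 := (Real.sqrt_pos.mpr hsig).ne'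
  have hres : ∫ ω, (X ω j - θ ⬝ᵥ fun i : F => X ω i) ∂ν
      = Real.sqrt (sigma2 μ X F j) * ∫ ω, gammaRes μ X F j ω ∂ν := by
    rw [← integral_congr_ae (ae_restrict_of_ae (xres_ae_eq hLCM hj)), ← integral_const_mul]
    refine integral_congr_ae (ae_of_all _ fun ω => ?_)
    simp only [gammaRes]
    field_simp
  have hsplit : ∫ ω, (X ω j - θ ⬝ᵥ fun i : F => X ω i) ∂ν
      = ∫ ω, X ω j ∂ν - θ ⬝ᵥ fun i : F => ∫ ω, X ω i ∂ν := by
    rw [integral_sub ((hmom j).integrable one_le_two).restrict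
        ((memLp_dotProduct hmom θ).integrable one_le_two).restrict,
      integral_const_dotProduct (Z := fun ω (i : F) => X ω i) _
        fun i => ((hmom i.1).integrable one_le_two).restrict]
  have hU : sliceU μ X Y J F h = (sliceP μ Y J h)⁻¹ • fun i : F => ∫ ω, X ω i ∂ν := by
    funext i
    simp only [sliceU, Pi.smul_apply, smul_eq_mul, ν, div_eq_inv_mul]
  change (∫ ω, X ω j ∂ν) / sliceP μ Y J h = _
  rw [hU, dotProduct_smul, gammaH, eq_sub_iff_add_eq.mp hsplit |>.symm, hres]
  simp only [smul_eq_mul, ν]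
  ring

end Residual

section InsertStep

variable {F : Finset (Fin p)} {j : Fin p}

theorem covM_insert_submatrix [IsFiniteMeasure μ] (hmom : ∀ i, MemLp (fun ω => X ω i) 2 μ)
    (hmean : ∀ i, ∫ ω, X ω i ∂μ = 0) (hLCM : SubsetLCM μ X) (hA : IsUnit (covM μ X F).det)
    (hj : j ∉ F) :
    (covM μ X (insert j F)).submatrix (Finset.subtypeInsertEquivOption hj).symm
        (Finset.subtypeInsertEquivOption hj).symm
      = optionBlocks (covM μ X F) (covM μ X F *ᵥ thetaJF μ X F j)
          (thetaJF μ X F j ⬝ᵥ covM μ X F *ᵥ thetaJF μ X F j + sigma2 μ X F j) := by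
  ext (_ | a) (_ | b)
  · exact integral_coord_mul_self hmom hmean hLCM hA hj
  · rw [covM_mulVec_thetaJF hA]
    rfl
  · rw [covM_mulVec_thetaJF hA]
    exact integral_congr_ae (ae_of_all _ fun ω => mul_comm _ _)
  · rfl

theorem sliceU_insert_comp_symm [IsFiniteMeasure μ] {H : ℕ} (Y : Ω → ℝ) (J : Fin H → Set ℝ)
    (hmom : ∀ i, MemLp (fun ω => X ω i) 2 μ) (hLCM : SubsetLCM μ X) (hj : j ∉ F)
    (hsig : 0 < sigma2 μ X F j) (h : Fin H) :
    sliceU μ X Y J (insert j F) h ∘ (Finset.subtypeInsertEquivOption hj).symm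
      = (Option.elim · (thetaJF μ X F j ⬝ᵥ sliceU μ X Y J F h
          + Real.sqrt (sigma2 μ X F j) * gammaH μ X Y J F j h) (sliceU μ X Y J F h)) := by
  funext o
  cases o with
  | none => exact sliceU_insert_self Y J hmom hLCM hj hsig h
  | some a => rfl

theorem sliceU_insert_dotProduct_inv_mulVec [IsFiniteMeasure μ] {H : ℕ} (Y : Ω → ℝ)
    (J : Fin H → Set ℝ) (hmom : ∀ i, MemLp (fun ω => X ω i) 2 μ)
    (hmean : ∀ i, ∫ ω, X ω i ∂μ = 0) (hLCM : SubsetLCM μ X) (hA : IsUnit (covM μ X F).det)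
    (hj : j ∉ F) (hsig : 0 < sigma2 μ X F j) (h h' : Fin H) :
    sliceU μ X Y J (insert j F) h ⬝ᵥ (covM μ X (insert j F))⁻¹ *ᵥ sliceU μ X Y J (insert j F) h'
      = sliceU μ X Y J F h ⬝ᵥ (covM μ X F)⁻¹ *ᵥ sliceU μ X Y J F h'
        + gammaH μ X Y J F j h * gammaH μ X Y J F j h' := by
  rw [dotProduct_inv_mulVec_comp_equiv (Finset.subtypeInsertEquivOption hj),
    covM_insert_submatrix hmom hmean hLCM hA hj, sliceU_insert_comp_symm Y J hmom hLCM hj hsig,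
    sliceU_insert_comp_symm Y J hmom hLCM hj hsig,
    elim_dotProduct_inv_optionBlocks_mulVec (covM_isSymm F) hA hsig.ne', add_sub_cancel_left,
    add_sub_cancel_left, mul_mul_mul_comm, Real.mul_self_sqrt hsig.le,
    mul_div_cancel_left₀ _ hsig.ne']

theorem trace_MDR2_sq {H : ℕ} (Y : Ω → ℝ) (J : Fin H → Set ℝ) {S : Matrix F F ℝ}
    (hS : IsInvSqrt S (covM μ X F)) :
    ((MDR2 μ X Y J F S) ^ 2).trace = ∑ h, ∑ h', sliceP μ Y J h * sliceP μ Y J h'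
      * (sliceU μ X Y J F h ⬝ᵥ (covM μ X F)⁻¹ *ᵥ sliceU μ X Y J F h') ^ 2 := by
  simp only [MDR2, hS.1.mul_vecMulVec_mul, trace_sq_sum_smul_vecMulVec,
    hS.1.mulVec_dotProduct_mulVec, hS.2]

theorem iotaSum_dotProduct_self {H : ℕ} (Y : Ω → ℝ) (J : Fin H → Set ℝ) {S : Matrix F F ℝ}
    (hS : IsInvSqrt S (covM μ X F)) :
    iotaSum μ X Y J F S j ⬝ᵥ iotaSum μ X Y J F S j
      = ∑ h, ∑ h', sliceP μ Y J h * gammaH μ X Y J F j h * (sliceP μ Y J h' * gammaH μ X Y J F j h')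
        * (sliceU μ X Y J F h ⬝ᵥ (covM μ X F)⁻¹ *ᵥ sliceU μ X Y J F h') := by
  simp only [iotaSum, iotaH, smul_smul, hS.1.sum_smul_mulVec_dotProduct_self, hS.2]

end InsertStep

end TracePursuit

theorem dr2_trace_identity_general {Ω : Type*} [m0 : MeasurableSpace Ω]
    (μ : Measure Ω) [IsProbabilityMeasure μ]
    {p H : ℕ} (X : Ω → Fin p → ℝ) (Y : Ω → ℝ)
    (hmom : ∀ i, MemLp (fun ω => X ω i) 4 μ)
    (hmean : ∀ i, ∫ ω, X ω i ∂μ = 0)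
    (hpos : (covM μ X Finset.univ).PosDef)
    (J : Fin H → Set ℝ)
    (invS : ∀ F : Finset (Fin p), Matrix F F ℝ)
    (hinvS : ∀ F, IsInvSqrt (invS F) (covM μ X F))
    (hLCM : SubsetLCM μ X)
    (F : Finset (Fin p)) (j : Fin p) (hj : j ∉ F)
    (hsig : 0 < sigma2 μ X F j) :
    ((MDR2 μ X Y J (insert j F) (invS (insert j F))) ^ 2).trace
      = ((MDR2 μ X Y J F (invS F)) ^ 2).trace
        + 2 * (iotaSum μ X Y J F (invS F) j ⬝ᵥ iotaSum μ X Y J F (invS F) j)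
        + rhoJF μ X Y J F j ^ 2 := by
  have hmom₂ : ∀ i, MemLp (fun ω => X ω i) 2 μ := fun i => (hmom i).mono_exponent (by norm_num)
  have hA : IsUnit (covM μ X F).det := (isUnit_iff_isUnit_det _).mp (covM_posDef hpos F).isUnit
  rw [trace_MDR2_sq Y J (hinvS _), trace_MDR2_sq Y J (hinvS F),
    iotaSum_dotProduct_self Y J (hinvS F), rhoJF, sq (∑ h, _), Finset.sum_mul_sum]
  simp only [sliceU_insert_dotProduct_inv_mulVec Y J hmom₂ hmean hLCM hA hj hsig,
    Finset.mul_sum, ← Finset.sum_add_distrib]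
  refine Finset.sum_congr rfl fun h _ => Finset.sum_congr rfl fun h' _ => ?_
  ring

/-- Under the subset LCM assumption, for any `F ⊂ I` and `j ∈ Fᶜ`,
`trace((M^{DR2}_{F∪{j}})²) = trace((M^{DR2}_F)²) + 2ι_{j|F}ᵀι_{j|F} + ϱ_{j|F}²`. -/
theorem dr2_trace_identity {Ω : Type*} [m0 : MeasurableSpace Ω]
    (μ : Measure Ω) [IsProbabilityMeasure μ]
    {p H : ℕ} (X : Ω → Fin p → ℝ) (Y : Ω → ℝ)
    (hX : Measurable X) (hY : Measurable Y)
    (hmom : ∀ i, MemLp (fun ω => X ω i) 4 μ)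
    (hmean : ∀ i, ∫ ω, X ω i ∂μ = 0)
    (hpos : (covM μ X Finset.univ).PosDef)
    (J : Fin H → Set ℝ) (hJ : IsSlicePartition J)
    (hph : ∀ h, 0 < sliceP μ Y J h)
    (invS : ∀ F : Finset (Fin p), Matrix F F ℝ)
    (hinvS : ∀ F, IsInvSqrt (invS F) (covM μ X F))
    (hLCM : SubsetLCM μ X)
    (F : Finset (Fin p)) (j : Fin p) (hj : j ∉ F)
    (hsig : 0 < sigma2 μ X F j) :
    ((MDR2 μ X Y J (insert j F) (invS (insert j F))) ^ 2).trace
      = ((MDR2 μ X Y J F (invS F)) ^ 2).trace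
        + 2 * (iotaSum μ X Y J F (invS F) j ⬝ᵥ iotaSum μ X Y J F (invS F) j)
        + rhoJF μ X Y J F j ^ 2 :=
  dr2_trace_identity_general (m0 := m0) μ X Y hmom hmean hpos J invS hinvS hLCM F j hj hsig
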